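/- Let X be a real-valued random variable with mean μ and variance σ². Fix ε > 0 and let N ≥ 34·σ²/ε². Let Y₁, …, Y_K be independent sample means, each the average of N i.i.d. copies of X, and let μ̂ = median(Y₁, …, Y_K). Then Pr[|μ̂ − μ| ≥ ε] ≤ 2·exp(−K/2). -/

import Mathlib

/-!
By Chebyshev, each batch mean misses `μ` by `ε` with probability at most
`σ² / (N ε²) ≤ 1/34`, and the batch means are independent since they are functions of disjoint
blocks of samples. If the median misses `μ` by `ε`, then so do at least `m = ⌈K/2⌉` of the batch
means (all those on the far side of the median). A union bound over the `K.choose m ≤ 2 ^ K` sets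
of `m` batches bounds the probability by
`2 ^ K * 34⁻¹ ^ m ≤ (4e / 34) ^ m * exp (-K/2) ≤ exp (-K/2)`.
-/

open MeasureTheory ProbabilityTheory

/-- The median of `K` real numbers `f 0, …, f (K−1)`: sort them and take the middle entry. -/
noncomputable def median (K : ℕ) (f : Fin K → ℝ) : ℝ :=
  (((List.ofFn f).mergeSort fun a b => decide (a ≤ b)).getD (K / 2) 0)

open Finset
open scoped ENNReal

namespace List
variable {α : Type*} [Preorder α] [DecidableLE α] {l : List α} {j : ℕ}

lemma Pairwise.length_sub_le_countP_ge (hl : l.Pairwise (· ≤ ·)) (hj : j < l.length) {a : α}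
    (ha : a ≤ l[j]) : l.length - j ≤ l.countP fun x ↦ a ≤ x := by
  have hge : ∀ y ∈ l.drop j, a ≤ y := by
    rw [drop_eq_getElem_cons hj]
    rintro y (_ | ⟨_, hy⟩)
    · exact ha
    · refine ha.trans <| hl.rel_of_mem_take_of_mem_drop ?_ hy
      rw [take_succ_eq_append_getElem hj]
      exact mem_append_right _ (mem_singleton_self _)
  calc l.length - j = (l.drop j).countP fun x ↦ a ≤ x := by
        rw [countP_eq_length.2 (by simpa using hge), length_drop]
    _ ≤ l.countP fun x ↦ a ≤ x := (drop_sublist j l).countP_le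

lemma Pairwise.succ_le_countP_le (hl : l.Pairwise (· ≤ ·)) (hj : j < l.length) {b : α}
    (hb : l[j] ≤ b) : j + 1 ≤ l.countP fun x ↦ x ≤ b := by
  have hle : ∀ x ∈ l.take (j + 1), x ≤ b := by
    rw [take_succ_eq_append_getElem hj]
    intro x hx
    rcases mem_append.1 hx with hx | hx
    · refine (hl.rel_of_mem_take_of_mem_drop hx ?_).trans hb
      rw [drop_eq_getElem_cons hj]
      exact mem_cons_self
    · exact mem_singleton.1 hx ▸ hb
  calc j + 1 = (l.take (j + 1)).countP fun x ↦ x ≤ b := by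
        rw [countP_eq_length.2 (by simpa using hle), length_take]; omega
    _ ≤ l.countP fun x ↦ x ≤ b := (take_sublist _ l).countP_le

lemma countP_ofFn {β : Type*} {K : ℕ} (f : Fin K → β) (p : β → Prop) [DecidablePred p] :
    (ofFn f).countP (p ·) = #{k | p (f k)} := by
  rw [ofFn_eq_map, countP_map, countP_eq_length_filter, Fin.univ_def, card_def, filter_val]
  simp [Function.comp_def]

end List

lemma sub_half_le_card_of_le_abs_median_sub {K : ℕ} (f : Fin K → ℝ) {c ε : ℝ}
    (h : ε ≤ |median K f - c|) : K - K / 2 ≤ #{k | ε ≤ |f k - c|} := by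
  rcases K.eq_zero_or_pos with rfl | hK
  · simp
  set l := (List.ofFn f).mergeSort fun a b ↦ decide (a ≤ b)
  have hlen : l.length = K := by simp [l]
  have hsorted : l.Pairwise (· ≤ ·) := List.pairwise_mergeSort' _ _
  have hj : K / 2 < l.length := by omega
  have hmedian : median K f = l[K / 2] := List.getD_eq_getElem _ _ hj
  have hcount : K - K / 2 ≤ l.countP fun x ↦ ε ≤ |x - c| := by
    rcases le_abs.1 h with h | h
    · calc K - K / 2 ≤ l.countP fun x ↦ c + ε ≤ x :=
            hlen ▸ hsorted.length_sub_le_countP_ge hj (by linarith)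
        _ ≤ _ := List.countP_mono_left fun x _ hx ↦ by
            simp only [decide_eq_true_eq] at hx ⊢
            exact le_abs.2 (Or.inl (by linarith))
    · calc K - K / 2 ≤ K / 2 + 1 := by omega
        _ ≤ l.countP fun x ↦ x ≤ c - ε := hsorted.succ_le_countP_le hj (by linarith)
        _ ≤ _ := List.countP_mono_left fun x _ hx ↦ by
            simp only [decide_eq_true_eq] at hx ⊢
            exact le_abs.2 (Or.inr (by linarith))
  rwa [(List.mergeSort_perm _ _).countP_eq, List.countP_ofFn] at hcount

lemma Real.choose_mul_pow_le_exp_neg_half {K m : ℕ} (hKm : K ≤ 2 * m) {p : ℝ} (hp₀ : 0 ≤ p)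
    (hp : 4 * exp 1 * p ≤ 1) : (K.choose m : ℝ) * p ^ m ≤ exp (-K / 2) := by
  have hbase : 1 ≤ 2 * exp (1 / 2) := by nlinarith [add_one_le_exp (1 / 2 : ℝ)]
  have hgrowth : (2 : ℝ) ^ K * exp (K / 2) ≤ (4 * exp 1) ^ m :=
    calc (2 : ℝ) ^ K * exp (K / 2) = (2 * exp (1 / 2)) ^ K := by
          rw [mul_pow, ← exp_nat_mul]; ring_nf
      _ ≤ (2 * exp (1 / 2)) ^ (2 * m) := pow_le_pow_right₀ hbase hKm
      _ = (4 * exp 1) ^ m := by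
          rw [pow_mul, mul_pow, ← exp_nat_mul]; norm_num
  calc (K.choose m : ℝ) * p ^ m ≤ 2 ^ K * p ^ m := by
        gcongr; exact_mod_cast K.choose_le_two_pow m
    _ = 2 ^ K * exp (K / 2) * p ^ m * exp (-K / 2) := by
        rw [neg_div, exp_neg]; field_simp
    _ ≤ (4 * exp 1) ^ m * p ^ m * exp (-K / 2) := by gcongr
    _ = (4 * exp 1 * p) ^ m * exp (-K / 2) := by rw [mul_pow (4 * exp 1)]
    _ ≤ exp (-K / 2) :=
        mul_le_of_le_one_left (exp_pos _).le (pow_le_one₀ (by positivity) hp)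

namespace ProbabilityTheory

lemma iIndepFun.curry {Ω ι κ 𝓧 : Type*} [MeasurableSpace Ω] [MeasurableSpace 𝓧]
    [Countable ι] [Countable κ] {P : Measure Ω} {X : ι → κ → Ω → 𝓧}
    (hX : ∀ i j, AEMeasurable (X i j) P) (h : iIndepFun (fun p : ι × κ ↦ X p.1 p.2) P) :
    iIndepFun (fun i ω j ↦ X i j ω) P := by
  have := h.isProbabilityMeasure
  have : ∀ i j, IsProbabilityMeasure (P.map (X i j)) :=
    fun i j ↦ Measure.isProbabilityMeasure_map (hX i j)
  have hjoint : P.map (fun ω (p : ι × κ) ↦ X p.1 p.2 ω) =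
      Measure.infinitePi fun p : ι × κ ↦ P.map (X p.1 p.2) :=
    h.map_fun_eq_infinitePi_map₀' fun p ↦ hX p.1 p.2
  have hrow : ∀ i, P.map (fun ω j ↦ X i j ω) = Measure.infinitePi fun j ↦ P.map (X i j) :=
    fun i ↦ (h.precomp (Prod.mk_right_injective i)).map_fun_eq_infinitePi_map₀' (hX i)
  rw [iIndepFun_iff_map_fun_eq_infinitePi_map₀ (aemeasurable_pi_iff.2 fun i ↦
    aemeasurable_pi_iff.2 (hX i))]
  simp_rw [hrow]
  rw [← Measure.infinitePi_map_curry, ← hjoint, AEMeasurable.map_map_of_aemeasurable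
    (MeasurableEquiv.curry ι κ 𝓧).measurable.aemeasurable
    (aemeasurable_pi_iff.2 fun p ↦ hX p.1 p.2)]
  rfl

open scoped Classical in
lemma iIndepFun.measure_le_card_preimage_le {Ω ι : Type*} [MeasurableSpace Ω] {P : Measure Ω}
    [Fintype ι] {β : ι → Type*} [∀ i, MeasurableSpace (β i)] {Y : ∀ i, Ω → β i}
    (hY : iIndepFun Y P) {S : ∀ i, Set (β i)} (hS : ∀ i, MeasurableSet (S i)) {p : ℝ≥0∞}
    (hp : ∀ i, P (Y i ⁻¹' S i) ≤ p) (m : ℕ) :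
    P {ω | m ≤ #{i | Y i ω ∈ S i}} ≤ (Fintype.card ι).choose m * p ^ m := by
  have hcover :
      {ω | m ≤ #{i | Y i ω ∈ S i}} ⊆ ⋃ s ∈ powersetCard m univ, ⋂ i ∈ s, Y i ⁻¹' S i := by
    intro ω hω
    obtain ⟨s, hs, hcard⟩ := exists_subset_card_eq hω
    refine Set.mem_biUnion (mem_powersetCard.2 ⟨subset_univ s, hcard⟩) (Set.mem_iInter₂.2 ?_)
    exact fun i hi ↦ (mem_filter.1 (hs hi)).2
  calc P {ω | m ≤ #{i | Y i ω ∈ S i}}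
      ≤ ∑ s ∈ powersetCard m univ, P (⋂ i ∈ s, Y i ⁻¹' S i) :=
        (measure_mono hcover).trans (measure_biUnion_finset_le _ _)
    _ = ∑ s ∈ powersetCard m univ, ∏ i ∈ s, P (Y i ⁻¹' S i) := sum_congr rfl fun s _ ↦
        hY.meas_biInter fun i _ ↦ ⟨S i, hS i, rfl⟩
    _ ≤ ∑ s ∈ powersetCard m univ, p ^ m := sum_le_sum fun s hs ↦ by
        simpa [(mem_powersetCard.1 hs).2] using prod_le_prod' (s := s) fun i _ ↦ hp i
    _ = (Fintype.card ι).choose m * p ^ m := by simp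

lemma meas_abs_sampleMean_sub_ge_le {Ω ι : Type*} [MeasurableSpace Ω] {P : Measure Ω}
    [IsFiniteMeasure P] [Fintype ι] [Nonempty ι] {Y : ι → Ω → ℝ}
    (hY : ∀ i, MemLp (Y i) 2 P) (hindep : Pairwise fun i j ↦ IndepFun (Y i) (Y j) P)
    {m v ε : ℝ} (hmean : ∀ i, P[Y i] = m) (hvar : ∀ i, variance (Y i) P = v) (hε : 0 < ε) :
    P {ω | ε ≤ |(∑ i, Y i ω) / Fintype.card ι - m|}
      ≤ ENNReal.ofReal (v / (Fintype.card ι * ε ^ 2)) := by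
  set n : ℝ := (Fintype.card ι : ℝ)
  have hn : 0 < n := by positivity
  have hsum_mean : P[∑ i, Y i] = n * m := by
    simp [integral_finsetSum _ fun i _ ↦ (hY i).integrable one_le_two, hmean, n]
  have hsum_var : variance (∑ i, Y i) P = n * v := by
    rw [IndepFun.variance_sum (fun i _ ↦ hY i) fun i _ j _ hij ↦ hindep hij]
    simp [hvar, n]
  have hevent :
      {ω | ε ≤ |(∑ i, Y i ω) / n - m|} = {ω | n * ε ≤ |(∑ i, Y i) ω - P[∑ i, Y i]|} := by
    ext ω
    rw [Set.mem_ofPred_eq, Set.mem_ofPred_eq, hsum_mean, Finset.sum_apply,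
      show (∑ i, Y i ω) / n - m = ((∑ i, Y i ω) - n * m) / n by field_simp,
      abs_div, abs_of_pos hn, le_div_iff₀ hn, mul_comm]
  calc P {ω | ε ≤ |(∑ i, Y i ω) / n - m|}
      ≤ ENNReal.ofReal (variance (∑ i, Y i) P / (n * ε) ^ 2) :=
        hevent ▸ meas_ge_le_variance_div_sq (memLp_finsetSum' _ fun i _ ↦ hY i) (by positivity)
    _ = ENNReal.ofReal (v / (n * ε ^ 2)) := by
        rw [hsum_var]; congr 1; field_simp

end ProbabilityTheory

theorem stmt_2_general {Ω : Type*} [MeasureSpace Ω] [IsProbabilityMeasure (ℙ : Measure Ω)]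
    (K N : ℕ) (hN : 0 < N)
    (X : Fin K → Fin N → Ω → ℝ) (X₀ : Ω → ℝ) (μ σ ε : ℝ) (hε : 0 < ε)
    (hL2 : MemLp X₀ 2 ℙ)
    (hmean : ∫ ω, X₀ ω = μ)
    (hvar : variance X₀ ℙ = σ ^ 2)
    (hident : ∀ k i, IdentDistrib (X k i) X₀ ℙ ℙ)
    (hindep : iIndepFun (fun p : Fin K × Fin N => X p.1 p.2) ℙ)
    (hNbig : (N : ℝ) ≥ 34 * σ ^ 2 / ε ^ 2) :
    ℙ {ω | ε ≤ |median K (fun k => (∑ i, X k i ω) / N) - μ|}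
      ≤ ENNReal.ofReal (2 * Real.exp (-(K : ℝ) / 2)) := by
  classical
  have : Nonempty (Fin N) := ⟨⟨0, hN⟩⟩
  have hXL2 : ∀ k i, MemLp (X k i) 2 ℙ := fun k i ↦ (hident k i).symm.memLp_snd hL2
  set Y : Fin K → Ω → ℝ := fun k ω ↦ (∑ i, X k i ω) / N
  have hY_indep : iIndepFun Y ℙ :=
    (hindep.curry fun k i ↦ (hXL2 k i).aemeasurable).comp (fun _ v ↦ (∑ i, v i) / N)
      fun _ ↦ by fun_prop
  have hY_far : ∀ k, ℙ (Y k ⁻¹' {y | ε ≤ |y - μ|}) ≤ ENNReal.ofReal (1 / 34) := by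
    intro k
    have hcheb := meas_abs_sampleMean_sub_ge_le (hXL2 k)
      (fun i j hij ↦ hindep.indepFun ((Prod.mk_right_injective k).ne hij))
      (fun i ↦ (hident k i).integral_eq.trans hmean)
      (fun i ↦ (hident k i).variance_eq.trans hvar) hε
    rw [Fintype.card_fin] at hcheb
    refine hcheb.trans (ENNReal.ofReal_le_ofReal ?_)
    rw [ge_iff_le, div_le_iff₀ (by positivity)] at hNbig
    rw [div_le_div_iff₀ (by positivity) (by norm_num)]
    linarith
  have h34 : 4 * Real.exp 1 * (1 / 34) ≤ 1 := by linarith [Real.exp_one_lt_d9]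
  calc ℙ {ω | ε ≤ |median K (fun k ↦ (∑ i, X k i ω) / N) - μ|}
      ≤ ℙ {ω | K - K / 2 ≤ #{k | Y k ω ∈ {y | ε ≤ |y - μ|}}} :=
        measure_mono fun ω hω ↦ by simpa using sub_half_le_card_of_le_abs_median_sub _ hω
    _ ≤ K.choose (K - K / 2) * ENNReal.ofReal (1 / 34) ^ (K - K / 2) := by
        simpa using hY_indep.measure_le_card_preimage_le
          (fun _ ↦ measurableSet_le measurable_const (by fun_prop)) hY_far (K - K / 2)
    _ = ENNReal.ofReal (K.choose (K - K / 2) * (1 / 34) ^ (K - K / 2)) := by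
        rw [ENNReal.ofReal_mul (by positivity), ENNReal.ofReal_pow (by norm_num),
          ENNReal.ofReal_natCast]
    _ ≤ ENNReal.ofReal (2 * Real.exp (-(K : ℝ) / 2)) := ENNReal.ofReal_le_ofReal <|
        (Real.choose_mul_pow_le_exp_neg_half (by omega) (by norm_num) h34).trans
          (by linarith [Real.exp_pos (-(K : ℝ) / 2)])

theorem stmt_2 {Ω : Type*} [MeasureSpace Ω] [IsProbabilityMeasure (ℙ : Measure Ω)]
    (K N : ℕ) (hK : 0 < K) (hN : 0 < N)
    (X : Fin K → Fin N → Ω → ℝ) (X₀ : Ω → ℝ) (μ σ ε : ℝ) (hε : 0 < ε)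
    (hmeas : ∀ k i, Measurable (X k i)) (hmeas₀ : Measurable X₀)
    (hL2 : MemLp X₀ 2 ℙ)
    (hmean : ∫ ω, X₀ ω = μ)
    (hvar : variance X₀ ℙ = σ ^ 2)
    (hident : ∀ k i, IdentDistrib (X k i) X₀ ℙ ℙ)
    (hindep : iIndepFun (fun p : Fin K × Fin N => X p.1 p.2) ℙ)
    (hNbig : (N : ℝ) ≥ 34 * σ ^ 2 / ε ^ 2) :
    ℙ {ω | ε ≤ |median K (fun k => (∑ i, X k i ω) / N) - μ|}
      ≤ ENNReal.ofReal (2 * Real.exp (-(K : ℝ) / 2)) :=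
  stmt_2_general K N hN X X₀ μ σ ε hε hL2 hmean hvar hident hindep hNbig
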